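/- The two-dimensional subalgebras of A4 are exactly the subspaces ⟨e1, e2⟩, ⟨e1 + i·e3, e2⟩, ⟨e1 − i·e3, e2⟩, ⟨e1 − e2, e3⟩, ⟨e1, i·e2 + e3⟩, and ⟨e1, −i·e2 + e3⟩, where i is the imaginary unit. -/
import Mathlib


set_option linter.unreachableTactic false
set_option linter.unnecessarySeqFocus false
set_option linter.unusedTactic false

noncomputable section

/-- The underlying space of our 3-dimensional algebras. -/
abbrev V3 : Type := Fin 3 → ℂ
/-- Multiplication of `A4`: unit `e1`, with `e2 * e2 = e2`, `e3 * e3 = -e1 + e2`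
and `e2 * e3 = e3 * e2 = 0`. -/
def A4mul : V3 →ₗ[ℂ] V3 →ₗ[ℂ] V3 :=
  LinearMap.mk₂ ℂ
    (fun x y => ![x 0 * y 0 - x 2 * y 2,
                  x 0 * y 1 + x 1 * y 0 + x 1 * y 1 + x 2 * y 2,
                  x 0 * y 2 + x 2 * y 0])
    (fun x x' y => by funext k; fin_cases k <;> simp <;> ring)
    (fun a x y => by funext k; fin_cases k <;> simp <;> ring)
    (fun x y y' => by funext k; fin_cases k <;> simp <;> ring)
    (fun a x y => by funext k; fin_cases k <;> simp <;> ring)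
/-- The basis vector `e1` (the unit). -/
def e1 : V3 := ![1, 0, 0]
/-- The basis vector `e2`. -/
def e2 : V3 := ![0, 1, 0]
/-- The basis vector `e3`. -/
def e3 : V3 := ![0, 0, 1]

open Submodule Module Polynomial

/-- First coordinate w.r.t. the idempotent basis. -/
def q1 (x : V3) : ℂ := x 0 + x 1
/-- Second coordinate w.r.t. the idempotent basis. -/
def q2 (x : V3) : ℂ := x 0 - Complex.I * x 2
/-- Third coordinate w.r.t. the idempotent basis. -/
def q3 (x : V3) : ℂ := x 0 + Complex.I * x 2

lemma A4mul_apply (x y : V3) : A4mul x y = ![x 0 * y 0 - x 2 * y 2,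
                  x 0 * y 1 + x 1 * y 0 + x 1 * y 1 + x 2 * y 2,
                  x 0 * y 2 + x 2 * y 0] := rfl

lemma q1_mul (x y : V3) : q1 (A4mul x y) = q1 x * q1 y := by
  simp [q1, A4mul_apply]; ring
lemma q2_mul (x y : V3) : q2 (A4mul x y) = q2 x * q2 y := by
  simp [q2, A4mul_apply]; linear_combination (-(x 2 * y 2)) * Complex.I_sq
lemma q3_mul (x y : V3) : q3 (A4mul x y) = q3 x * q3 y := by
  simp [q3, A4mul_apply]; linear_combination (-(x 2 * y 2)) * Complex.I_sq

lemma quadroots {p q r a b c : ℂ}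
    (h1 : a*p + b*p^2 + c*p^3 = 0) (h2 : a*q + b*q^2 + c*q^3 = 0)
    (h3 : a*r + b*r^2 + c*r^3 = 0)
    (hp : p ≠ 0) (hq : q ≠ 0) (hr : r ≠ 0)
    (hpq : p ≠ q) (hpr : p ≠ r) (hqr : q ≠ r) :
    a = 0 ∧ b = 0 ∧ c = 0 := by
  have e1 : a + b*p + c*p^2 = 0 := by
    rcases mul_eq_zero.mp (show p * (a + b*p + c*p^2) = 0 by linear_combination h1) with h | h
    · exact absurd h hp
    · exact h
  have e2 : a + b*q + c*q^2 = 0 := by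
    rcases mul_eq_zero.mp (show q * (a + b*q + c*q^2) = 0 by linear_combination h2) with h | h
    · exact absurd h hq
    · exact h
  have e3 : a + b*r + c*r^2 = 0 := by
    rcases mul_eq_zero.mp (show r * (a + b*r + c*r^2) = 0 by linear_combination h3) with h | h
    · exact absurd h hr
    · exact h
  have f12 : b + c*(p+q) = 0 := by
    rcases mul_eq_zero.mp (show (p - q) * (b + c*(p+q)) = 0 by linear_combination e1 - e2) with h | h
    · exact absurd (sub_eq_zero.mp h) hpq
    · exact h
  have f13 : b + c*(p+r) = 0 := by
    rcases mul_eq_zero.mp (show (p - r) * (b + c*(p+r)) = 0 by linear_combination e1 - e3) with h | h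
    · exact absurd (sub_eq_zero.mp h) hpr
    · exact h
  have hc : c = 0 := by
    rcases mul_eq_zero.mp (show (q - r) * c = 0 by linear_combination f12 - f13) with h | h
    · exact absurd (sub_eq_zero.mp h) hqr
    · exact h
  have hb : b = 0 := by linear_combination f12 - (p+q) * hc
  have ha : a = 0 := by linear_combination e1 - p * hb - p^2 * hc
  exact ⟨ha, hb, hc⟩

/-- Every element of a 2-dimensional subalgebra has its `q`-coordinates either
vanishing or colliding. -/
lemma key {W : Submodule ℂ V3} (hmul : ∀ x ∈ W, ∀ y ∈ W, A4mul x y ∈ W)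
    (h2 : Module.finrank ℂ W = 2) {x : V3} (hx : x ∈ W) :
    q1 x * q2 x * q3 x * (q1 x - q2 x) * (q1 x - q3 x) * (q2 x - q3 x) = 0 := by
  by_contra hne
  have n6 : q2 x - q3 x ≠ 0 := right_ne_zero_of_mul hne
  have h5 := left_ne_zero_of_mul hne
  have n5 : q1 x - q3 x ≠ 0 := right_ne_zero_of_mul h5
  have h4 := left_ne_zero_of_mul h5
  have n4 : q1 x - q2 x ≠ 0 := right_ne_zero_of_mul h4
  have h3 := left_ne_zero_of_mul h4
  have n3 : q3 x ≠ 0 := right_ne_zero_of_mul h3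
  have h2' := left_ne_zero_of_mul h3
  have n2 : q2 x ≠ 0 := right_ne_zero_of_mul h2'
  have n1 : q1 x ≠ 0 := left_ne_zero_of_mul h2'
  set x2 := A4mul x x with hx2
  set x3 := A4mul x x2 with hx3
  have hx2m : x2 ∈ W := hmul x hx x hx
  have hx3m : x3 ∈ W := hmul x hx x2 hx2m
  have : FiniteDimensional ℂ W := by
    have : FiniteDimensional ℂ V3 := by infer_instance
    infer_instance
  have hdep : ¬ LinearIndependent ℂ (![⟨x, hx⟩, ⟨x2, hx2m⟩, ⟨x3, hx3m⟩] : Fin 3 → W) := by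
    intro h
    have := h.fintype_card_le_finrank
    rw [h2] at this
    simp at this
  obtain ⟨g, hsum, i, hgi⟩ := Fintype.not_linearIndependent_iff.mp hdep
  have hveq : g 0 • x + g 1 • x2 + g 2 • x3 = (0 : V3) := by
    have := congrArg (Subtype.val) hsum
    simpa [Fin.sum_univ_three] using this
  have h0 := congrFun hveq 0
  have h1 := congrFun hveq 1
  have hc2 := congrFun hveq 2
  simp only [Pi.add_apply, Pi.smul_apply, smul_eq_mul, Pi.zero_apply] at h0 h1 hc2
  have m21 : q1 x2 = q1 x * q1 x := q1_mul x x
  have m22 : q2 x2 = q2 x * q2 x := q2_mul x x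
  have m23 : q3 x2 = q3 x * q3 x := q3_mul x x
  have m31 : q1 x3 = q1 x * q1 x2 := q1_mul x x2
  have m32 : q2 x3 = q2 x * q2 x2 := q2_mul x x2
  have m33 : q3 x3 = q3 x * q3 x2 := q3_mul x x2
  have ep : g 0 * q1 x + g 1 * (q1 x)^2 + g 2 * (q1 x)^3 = 0 := by
    simp only [q1] at m21 m31 ⊢
    linear_combination h0 + h1 - g 1 * m21 - g 2 * m31 - (g 2 * (x 0 + x 1)) * m21
  have eq' : g 0 * q2 x + g 1 * (q2 x)^2 + g 2 * (q2 x)^3 = 0 := by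
    simp only [q2] at m22 m32 ⊢
    linear_combination h0 - Complex.I * hc2 - g 1 * m22 - g 2 * m32 - (g 2 * (x 0 - Complex.I * x 2)) * m22
  have er : g 0 * q3 x + g 1 * (q3 x)^2 + g 2 * (q3 x)^3 = 0 := by
    simp only [q3] at m23 m33 ⊢
    linear_combination h0 + Complex.I * hc2 - g 1 * m23 - g 2 * m33 - (g 2 * (x 0 + Complex.I * x 2)) * m23
  obtain ⟨ha, hb, hc⟩ := quadroots ep eq' er n1 n2 n3 (sub_ne_zero.mp n4) (sub_ne_zero.mp n5) (sub_ne_zero.mp n6)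
  fin_cases i <;> simp_all

lemma finrank_pair {a b : V3} (h : LinearIndependent ℂ ![a, b]) :
    finrank ℂ (span ℂ ({a, b} : Set V3)) = 2 := by
  have : ({a, b} : Set V3) = Set.range ![a, b] := by
    ext z; simp [Fin.exists_fin_two]; tauto
  rw [this, finrank_span_eq_card h]
  simp

lemma indep1 : LinearIndependent ℂ ![e1, e2] := by
  rw [LinearIndependent.pair_iff]
  intro s t h
  exact ⟨by simpa [e1, e2] using congrFun h 0, by simpa [e1, e2] using congrFun h 1⟩
lemma indep2 : LinearIndependent ℂ ![e1 + Complex.I • e3, e2] := by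
  rw [LinearIndependent.pair_iff]
  intro s t h
  exact ⟨by simpa [e1, e2, e3] using congrFun h 0, by simpa [e1, e2, e3] using congrFun h 1⟩
lemma indep3 : LinearIndependent ℂ ![e1 - Complex.I • e3, e2] := by
  rw [LinearIndependent.pair_iff]
  intro s t h
  exact ⟨by simpa [e1, e2, e3] using congrFun h 0, by simpa [e1, e2, e3] using congrFun h 1⟩
lemma indep4 : LinearIndependent ℂ ![e1 - e2, e3] := by
  rw [LinearIndependent.pair_iff]
  intro s t h
  exact ⟨by simpa [e1, e2, e3] using congrFun h 0, by simpa [e1, e2, e3] using congrFun h 2⟩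
lemma indep5 : LinearIndependent ℂ ![e1, Complex.I • e2 + e3] := by
  rw [LinearIndependent.pair_iff]
  intro s t h
  exact ⟨by simpa [e1, e2, e3] using congrFun h 0, by simpa [e1, e2, e3] using congrFun h 2⟩
lemma indep6 : LinearIndependent ℂ ![e1, -(Complex.I • e2) + e3] := by
  rw [LinearIndependent.pair_iff]
  intro s t h
  exact ⟨by simpa [e1, e2, e3] using congrFun h 0, by simpa [e1, e2, e3] using congrFun h 2⟩

lemma memS1 {x : V3} (h : x 2 = 0) : x ∈ span ℂ ({e1, e2} : Set V3) :=
  mem_span_pair.mpr ⟨x 0, x 1, by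
    funext k; fin_cases k <;> simp [e1, e2] <;> linear_combination -h⟩
lemma memS2 {x : V3} (h : x 0 + Complex.I * x 2 = 0) :
    x ∈ span ℂ ({e1 + Complex.I • e3, e2} : Set V3) :=
  mem_span_pair.mpr ⟨x 0, x 1, by
    funext k; fin_cases k <;> simp [e1, e2, e3] <;>
      linear_combination Complex.I * h - x 2 * Complex.I_sq⟩
lemma memS3 {x : V3} (h : x 0 - Complex.I * x 2 = 0) :
    x ∈ span ℂ ({e1 - Complex.I • e3, e2} : Set V3) :=
  mem_span_pair.mpr ⟨x 0, x 1, by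
    funext k; fin_cases k <;> simp [e1, e2, e3] <;>
      linear_combination -Complex.I * h - x 2 * Complex.I_sq⟩
lemma memS4 {x : V3} (h : x 0 + x 1 = 0) : x ∈ span ℂ ({e1 - e2, e3} : Set V3) :=
  mem_span_pair.mpr ⟨x 0, x 2, by
    funext k; fin_cases k <;> simp [e1, e2, e3] <;> linear_combination -h⟩
lemma memS5 {x : V3} (h : x 1 - Complex.I * x 2 = 0) :
    x ∈ span ℂ ({e1, Complex.I • e2 + e3} : Set V3) :=
  mem_span_pair.mpr ⟨x 0, x 2, by
    funext k; fin_cases k <;> simp [e1, e2, e3] <;> linear_combination -h⟩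
lemma memS6 {x : V3} (h : x 1 + Complex.I * x 2 = 0) :
    x ∈ span ℂ ({e1, -(Complex.I • e2) + e3} : Set V3) :=
  mem_span_pair.mpr ⟨x 0, x 2, by
    funext k; fin_cases k <;> simp [e1, e2, e3] <;> linear_combination -h⟩

/-- A span of two vectors is closed under `A4mul` as soon as the products of the
generators lie in it. -/
lemma closed_of_gen {a b : V3}
    (haa : A4mul a a ∈ span ℂ ({a, b} : Set V3))
    (hab : A4mul a b ∈ span ℂ ({a, b} : Set V3))
    (hba : A4mul b a ∈ span ℂ ({a, b} : Set V3))
    (hbb : A4mul b b ∈ span ℂ ({a, b} : Set V3)) :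
    ∀ x ∈ span ℂ ({a, b} : Set V3), ∀ y ∈ span ℂ ({a, b} : Set V3),
      A4mul x y ∈ span ℂ ({a, b} : Set V3) := by
  intro x hx y hy
  obtain ⟨s, t, hst⟩ := mem_span_pair.mp hx
  obtain ⟨s', t', hst'⟩ := mem_span_pair.mp hy
  rw [← hst, ← hst']
  simp only [map_add, map_smul, LinearMap.add_apply, LinearMap.smul_apply]
  exact add_mem
    (smul_mem _ _ (add_mem (smul_mem _ _ haa) (smul_mem _ _ hba)))
    (smul_mem _ _ (add_mem (smul_mem _ _ hab) (smul_mem _ _ hbb)))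

lemma lin_poly_zero {α β : ℂ} (h : C α + C β * X = (0 : ℂ[X])) : α = 0 ∧ β = 0 := by
  have h0 := congrArg (Polynomial.eval 0) h
  have h1 := congrArg (Polynomial.eval 1) h
  simp at h0 h1
  refine ⟨h0, ?_⟩
  rw [h0] at h1
  simpa using h1

/-- **Theorem.** The two-dimensional subalgebras of `A4` are exactly
`⟨e1, e2⟩`, `⟨e1 ± i e3, e2⟩`, `⟨e1 − e2, e3⟩` and `⟨e1, ± i e2 + e3⟩`. -/
theorem two_dim_subalgebras_of_A4 (W : Submodule ℂ V3) :
    ((∀ x ∈ W, ∀ y ∈ W, A4mul x y ∈ W) ∧ Module.finrank ℂ W = 2) ↔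
      (W = Submodule.span ℂ {e1, e2} ∨
        W = Submodule.span ℂ {e1 + Complex.I • e3, e2} ∨
        W = Submodule.span ℂ {e1 - Complex.I • e3, e2} ∨
        W = Submodule.span ℂ {e1 - e2, e3} ∨
        W = Submodule.span ℂ {e1, Complex.I • e2 + e3} ∨
        W = Submodule.span ℂ {e1, -(Complex.I • e2) + e3}) := by
  constructor
  · rintro ⟨hmul, h2⟩
    have hfd : FiniteDimensional ℂ W := by
      have : FiniteDimensional ℂ V3 := by infer_instance
      infer_instance
    let b := Module.finBasisOfFinrankEq ℂ W h2
    set u : V3 := (b 0 : V3) with hu'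
    set v : V3 := (b 1 : V3) with hv'
    have hu : u ∈ W := (b 0).2
    have hv : v ∈ W := (b 1).2
    have hrep : ∀ x ∈ W, ∃ s t : ℂ, x = s • u + t • v := by
      intro x hx
      refine ⟨b.repr ⟨x, hx⟩ 0, b.repr ⟨x, hx⟩ 1, ?_⟩
      have h := b.sum_repr ⟨x, hx⟩
      rw [Fin.sum_univ_two] at h
      have h' := congrArg (Subtype.val) h
      simp only [Submodule.coe_add, Submodule.coe_smul] at h'
      exact h'.symm
    have hP : ∀ t : ℂ,
        (q1 u + q1 v * t) * (q2 u + q2 v * t) * (q3 u + q3 v * t) *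
          ((q1 u - q2 u) + (q1 v - q2 v) * t) * ((q1 u - q3 u) + (q1 v - q3 v) * t) *
          ((q2 u - q3 u) + (q2 v - q3 v) * t) = 0 := by
      intro t
      have hm : u + t • v ∈ W := add_mem hu (smul_mem _ _ hv)
      have hk := key hmul h2 hm
      simp only [q1, q2, q3, Pi.add_apply, Pi.smul_apply, smul_eq_mul] at hk ⊢
      linear_combination hk
    have hQ : (C (q1 u) + C (q1 v) * X) * (C (q2 u) + C (q2 v) * X) *
        (C (q3 u) + C (q3 v) * X) * (C (q1 u - q2 u) + C (q1 v - q2 v) * X) *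
        (C (q1 u - q3 u) + C (q1 v - q3 v) * X) *
        (C (q2 u - q3 u) + C (q2 v - q3 v) * X) = (0 : ℂ[X]) := by
      apply Polynomial.funext
      intro t
      simpa using hP t
    have hle : ∀ (S : Submodule ℂ V3), u ∈ S → v ∈ S → W ≤ S := by
      intro S hSu hSv x hx
      obtain ⟨s, t, rfl⟩ := hrep x hx
      exact add_mem (smul_mem _ _ hSu) (smul_mem _ _ hSv)
    rcases mul_eq_zero.mp hQ with h' | h6
    rcases mul_eq_zero.mp h' with h' | h5
    rcases mul_eq_zero.mp h' with h' | h4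
    rcases mul_eq_zero.mp h' with h' | h3
    rcases mul_eq_zero.mp h' with h1 | h2'
    · -- q1 = 0 : span {e1 - e2, e3}
      obtain ⟨hα, hβ⟩ := lin_poly_zero h1
      refine Or.inr (Or.inr (Or.inr (Or.inl ?_)))
      refine Submodule.eq_of_le_of_finrank_eq
        (hle _ (memS4 (by simpa [q1] using hα)) (memS4 (by simpa [q1] using hβ)))
        (by rw [h2, finrank_pair indep4])
    · -- q2 = 0 : span {e1 - i e3, e2}
      obtain ⟨hα, hβ⟩ := lin_poly_zero h2'
      refine Or.inr (Or.inr (Or.inl ?_))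
      refine Submodule.eq_of_le_of_finrank_eq
        (hle _ (memS3 (by simpa [q2] using hα)) (memS3 (by simpa [q2] using hβ)))
        (by rw [h2, finrank_pair indep3])
    · -- q3 = 0 : span {e1 + i e3, e2}
      obtain ⟨hα, hβ⟩ := lin_poly_zero h3
      refine Or.inr (Or.inl ?_)
      refine Submodule.eq_of_le_of_finrank_eq
        (hle _ (memS2 (by simpa [q3] using hα)) (memS2 (by simpa [q3] using hβ)))
        (by rw [h2, finrank_pair indep2])
    · -- q1 - q2 = 0 : span {e1, -(i e2) + e3}
      obtain ⟨hα, hβ⟩ := lin_poly_zero h4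
      refine Or.inr (Or.inr (Or.inr (Or.inr (Or.inr ?_))))
      refine Submodule.eq_of_le_of_finrank_eq
        (hle _ (memS6 (by simp only [q1, q2] at hα; linear_combination hα))
               (memS6 (by simp only [q1, q2] at hβ; linear_combination hβ)))
        (by rw [h2, finrank_pair indep6])
    · -- q1 - q3 = 0 : span {e1, i e2 + e3}
      obtain ⟨hα, hβ⟩ := lin_poly_zero h5
      refine Or.inr (Or.inr (Or.inr (Or.inr (Or.inl ?_))))
      refine Submodule.eq_of_le_of_finrank_eq
        (hle _ (memS5 (by simp only [q1, q3] at hα; linear_combination hα))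
               (memS5 (by simp only [q1, q3] at hβ; linear_combination hβ)))
        (by rw [h2, finrank_pair indep5])
    · -- q2 - q3 = 0 : span {e1, e2}
      obtain ⟨hα, hβ⟩ := lin_poly_zero h6
      have hu2 : u 2 = 0 := by
        have h' : Complex.I * u 2 = 0 := by
          simp only [q2, q3] at hα; linear_combination (-(1:ℂ)/2) * hα
        simpa [Complex.I_ne_zero] using mul_eq_zero.mp h'
      have hv2 : v 2 = 0 := by
        have h' : Complex.I * v 2 = 0 := by
          simp only [q2, q3] at hβ; linear_combination (-(1:ℂ)/2) * hβ
        simpa [Complex.I_ne_zero] using mul_eq_zero.mp h'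
      refine Or.inl ?_
      refine Submodule.eq_of_le_of_finrank_eq
        (hle _ (memS1 hu2) (memS1 hv2))
        (by rw [h2, finrank_pair indep1])
  · intro h
    rcases h with h | h | h | h | h | h <;> subst h <;>
      refine ⟨closed_of_gen ?_ ?_ ?_ ?_, ?_⟩
    · exact memS1 (by simp [A4mul_apply, e1, e2])
    · exact memS1 (by simp [A4mul_apply, e1, e2])
    · exact memS1 (by simp [A4mul_apply, e1, e2])
    · exact memS1 (by simp [A4mul_apply, e1, e2])
    · exact finrank_pair indep1
    · exact memS2 (by simp [A4mul_apply, e1, e2, e3]; linear_combination 2 * Complex.I_sq)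
    · exact memS2 (by simp [A4mul_apply, e1, e2, e3])
    · exact memS2 (by simp [A4mul_apply, e1, e2, e3])
    · exact memS2 (by simp [A4mul_apply, e1, e2, e3])
    · exact finrank_pair indep2
    · exact memS3 (by simp [A4mul_apply, e1, e2, e3]; linear_combination 2 * Complex.I_sq)
    · exact memS3 (by simp [A4mul_apply, e1, e2, e3])
    · exact memS3 (by simp [A4mul_apply, e1, e2, e3])
    · exact memS3 (by simp [A4mul_apply, e1, e2, e3])
    · exact finrank_pair indep3
    · exact memS4 (by simp [A4mul_apply, e1, e2, e3])
    · exact memS4 (by simp [A4mul_apply, e1, e2, e3])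
    · exact memS4 (by simp [A4mul_apply, e1, e2, e3])
    · exact memS4 (by simp [A4mul_apply, e1, e2, e3])
    · exact finrank_pair indep4
    · exact memS5 (by simp [A4mul_apply, e1, e2, e3])
    · exact memS5 (by simp [A4mul_apply, e1, e2, e3])
    · exact memS5 (by simp [A4mul_apply, e1, e2, e3])
    · exact memS5 (by simp [A4mul_apply, e1, e2, e3])
    · exact finrank_pair indep5
    · exact memS6 (by simp [A4mul_apply, e1, e2, e3])
    · exact memS6 (by simp [A4mul_apply, e1, e2, e3])
    · exact memS6 (by simp [A4mul_apply, e1, e2, e3])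
    · exact memS6 (by simp [A4mul_apply, e1, e2, e3])
    · exact finrank_pair indep6
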